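/- The generating series B(x,t) = Σ_T x^{|T|} t^{hook(T)}, summed over all binary trees T (the empty tree contributing 1), satisfies the functional equation B = 1 + x·t·(1/(1 − x·B))^2 in the ring of formal power series ℚ[[x,t]]. -/

import Mathlib

/-- Binary trees: `leaf` is the empty tree, `node l r` is a vertex with
left subtree `l` and right subtree `r`. -/
inductive BT : Type
  | leaf : BT
  | node : BT → BT → BT
  deriving DecidableEq

/-- Number of vertices of a binary tree. -/
def BT.size : BT → ℕ
  | leaf => 0
  | node l r => 1 + l.size + r.size

mutual
  /-- The number of hooks in the hook partition of a binary tree: one hook for the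
  root, plus the hooks of the trees hanging off the root's hook. -/
  def hookCount : BT → ℕ
    | .leaf => 0
    | .node l r => 1 + hookAuxL l + hookAuxR r
  /-- Total number of hooks of the right subtrees hanging off the leftmost branch. -/
  def hookAuxL : BT → ℕ
    | .leaf => 0
    | .node l r => hookCount r + hookAuxL l
  /-- Total number of hooks of the left subtrees hanging off the rightmost branch. -/
  def hookAuxR : BT → ℕ
    | .leaf => 0
    | .node l r => hookCount l + hookAuxR r
end

/-- The generating series `B(x,t) = ∑_T x^{|T|} t^{hook(T)}` over all binary trees,
in `ℚ[[x,t]]` with `x = X 0` and `t = X 1`: the coefficient of `xⁿ tᵏ` is the number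
of binary trees with `n` vertices and hook number `k` (the empty tree contributing 1). -/
noncomputable def Bser : MvPowerSeries (Fin 2) ℚ := fun d =>
  (Nat.card {T : BT // T.size = d 0 ∧ hookCount T = d 1} : ℚ)

/-!
Cutting off the root of a binary tree leaves a left and a right subtree. The hook of the
root continues along the leftmost branch of the left subtree and the rightmost branch of the
right subtree, so `B = 1 + x t L R`, where `L` (resp. `R`) counts trees by the hooks hanging
off their leftmost (resp. rightmost) branch. Cutting the root of such a tree gives
`L = 1 + x L B` and `R = 1 + x B R`, so `L = R = 1/(1 - x B)`.
-/

open MvPowerSeries Finset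

section GenSeries

variable {σ α β : Type*}

/-- `Nat.card` is `0` on infinite fibers, hence the finiteness assumptions below. -/
noncomputable def genSeries (s : α → σ →₀ ℕ) : MvPowerSeries σ ℚ :=
  fun d => (Nat.card {a // s a = d} : ℚ)

lemma coeff_genSeries (s : α → σ →₀ ℕ) (d : σ →₀ ℕ) :
    coeff d (genSeries s) = Nat.card {a // s a = d} := rfl

lemma genSeries_congr {s : α → σ →₀ ℕ} {t : β → σ →₀ ℕ} (e : α ≃ β) (h : ∀ a, t (e a) = s a) :
    genSeries s = genSeries t := by
  ext d
  simp only [coeff_genSeries]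
  exact congrArg _ (Nat.card_congr (e.subtypeEquiv fun a => by rw [h]))

lemma genSeries_unit_zero : genSeries (fun _ : Unit => (0 : σ →₀ ℕ)) = 1 := by
  classical
  ext d
  by_cases hd : d = 0
  · subst hd
    simp [coeff_genSeries]
  · have : IsEmpty {_u : Unit // (0 : σ →₀ ℕ) = d} := ⟨fun u => hd u.2.symm⟩
    simp [coeff_genSeries, coeff_one, hd]

lemma genSeries_sumElim (s : α → σ →₀ ℕ) (t : β → σ →₀ ℕ)
    [∀ d, Finite {a // s a = d}] [∀ d, Finite {b // t b = d}] :
    genSeries (Sum.elim s t) = genSeries s + genSeries t := by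
  ext d
  simp only [coeff_genSeries, map_add]
  have e : {x // Sum.elim s t x = d} ≃ {a // s a = d} ⊕ {b // t b = d} := Equiv.subtypeSum
  rw [Nat.card_congr e, Nat.card_sum]
  push_cast
  rfl

def constAddFiberEquiv (s : α → σ →₀ ℕ) (c d : σ →₀ ℕ) (hcd : c ≤ d) :
    {a // c + s a = d} ≃ {a // s a = d - c} :=
  Equiv.subtypeEquivRight fun a => by
    constructor
    · rintro rfl; simp
    · intro h; rw [h, add_tsub_cancel_of_le hcd]

lemma isEmpty_constAdd_fiber (s : α → σ →₀ ℕ) {c d : σ →₀ ℕ} (hcd : ¬ c ≤ d) :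
    IsEmpty {a // c + s a = d} :=
  ⟨fun a => hcd (a.2 ▸ le_self_add)⟩

instance finite_constAdd_fiber (s : α → σ →₀ ℕ) (c : σ →₀ ℕ) [∀ d, Finite {a // s a = d}]
    (d : σ →₀ ℕ) : Finite {a // c + s a = d} := by
  by_cases hcd : c ≤ d
  · exact Finite.of_equiv _ (constAddFiberEquiv s c d hcd).symm
  · have := isEmpty_constAdd_fiber s hcd
    infer_instance

lemma genSeries_const_add (s : α → σ →₀ ℕ) (c : σ →₀ ℕ) :
    genSeries (fun a => c + s a) = monomial c 1 * genSeries s := by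
  ext d
  rw [coeff_monomial_mul, coeff_genSeries]
  split_ifs with hcd
  · rw [one_mul, coeff_genSeries, Nat.card_congr (constAddFiberEquiv s c d hcd)]
  · have := isEmpty_constAdd_fiber s hcd
    simp

def prodFiberEquiv [DecidableEq σ] (s : α → σ →₀ ℕ) (t : β → σ →₀ ℕ) (d : σ →₀ ℕ) :
    {p : α × β // s p.1 + t p.2 = d} ≃
      Σ q : antidiagonal d, {a // s a = q.1.1} × {b // t b = q.1.2} where
  toFun p := ⟨⟨(s p.1.1, t p.1.2), mem_antidiagonal.2 p.2⟩, ⟨p.1.1, rfl⟩, ⟨p.1.2, rfl⟩⟩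
  invFun x := ⟨(x.2.1, x.2.2), by rw [x.2.1.2, x.2.2.2]; exact mem_antidiagonal.1 x.1.2⟩
  left_inv p := rfl
  right_inv := by
    rintro ⟨⟨⟨q₁, q₂⟩, _⟩, ⟨a, ha⟩, ⟨b, hb⟩⟩
    have ha' : s a = q₁ := ha
    have hb' : t b = q₂ := hb
    subst ha' hb'
    rfl

instance finite_prod_fiber (s : α → σ →₀ ℕ) (t : β → σ →₀ ℕ)
    [∀ d, Finite {a // s a = d}] [∀ d, Finite {b // t b = d}] (d : σ →₀ ℕ) :
    Finite {p : α × β // s p.1 + t p.2 = d} := by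
  classical
  exact Finite.of_equiv _ (prodFiberEquiv s t d).symm

lemma genSeries_prod (s : α → σ →₀ ℕ) (t : β → σ →₀ ℕ)
    [∀ d, Finite {a // s a = d}] [∀ d, Finite {b // t b = d}] :
    genSeries (fun p : α × β => s p.1 + t p.2) = genSeries s * genSeries t := by
  classical
  ext d
  rw [coeff_genSeries, coeff_mul, Nat.card_congr (prodFiberEquiv s t d), Nat.card_sigma,
    ← sum_coe_sort (antidiagonal d)]
  push_cast
  simp only [Nat.card_prod, Nat.cast_mul, coeff_genSeries]

end GenSeries

lemma MvPowerSeries.inv_one_sub_eq_of_eq_one_add_mul {σ k : Type*} [Field k]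
    {φ ψ : MvPowerSeries σ k} (hψ : constantCoeff ψ = 0) (h : φ = 1 + ψ * φ) :
    (1 - ψ)⁻¹ = φ :=
  (MvPowerSeries.inv_eq_iff_mul_eq_one (by simp [hψ])).2 (by linear_combination h)

namespace BT

def equivSum : BT ≃ Unit ⊕ BT × BT where
  toFun
    | leaf => .inl ()
    | node l r => .inr (l, r)
  invFun
    | .inl _ => leaf
    | .inr p => node p.1 p.2
  left_inv := by rintro (_ | _) <;> rfl
  right_inv := by rintro (_ | ⟨_, _⟩) <;> rfl

lemma finite_setOf_size_le : ∀ n : ℕ, {T : BT | T.size ≤ n}.Finite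
  | 0 => (Set.finite_singleton leaf).subset fun T hT => by
      cases T <;> simp_all [size]
  | n + 1 => by
      refine ((Set.finite_singleton leaf).union
        ((finite_setOf_size_le n).image2 node (finite_setOf_size_le n))).subset ?_
      rintro (_ | ⟨l, r⟩) h
      · simp
      · simp only [Set.mem_ofPred_eq, size] at h
        exact Or.inr ⟨l, by simp; omega, r, by simp; omega, rfl⟩

lemma genSeries_eq_one_add {σ : Type*} (s s₁ s₂ : BT → σ →₀ ℕ)
    [∀ d, Finite {T // s₁ T = d}] [∀ d, Finite {T // s₂ T = d}] (c : σ →₀ ℕ)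
    (h_leaf : s leaf = 0) (h_node : ∀ l r, s (node l r) = c + (s₁ l + s₂ r)) :
    genSeries s = 1 + monomial c 1 * (genSeries s₁ * genSeries s₂) :=
  calc genSeries s
      = genSeries (Sum.elim (fun _ : Unit => 0) fun p : BT × BT => c + (s₁ p.1 + s₂ p.2)) :=
        genSeries_congr equivSum (by rintro (_ | ⟨l, r⟩) <;> simp [equivSum, h_leaf, h_node])
    _ = 1 + monomial c 1 * (genSeries s₁ * genSeries s₂) := by
        rw [genSeries_sumElim, genSeries_unit_zero, genSeries_const_add, genSeries_prod]

/-- A tree statistic `f` recorded as the exponent `x ^ |T| * t ^ f T`. -/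
noncomputable def stat (f : BT → ℕ) (T : BT) : Fin 2 →₀ ℕ :=
  Finsupp.single 0 T.size + Finsupp.single 1 (f T)

lemma stat_eq_iff {f : BT → ℕ} {T : BT} {d : Fin 2 →₀ ℕ} :
    stat f T = d ↔ T.size = d 0 ∧ f T = d 1 := by
  constructor
  · rintro rfl
    simp [stat]
  · rintro ⟨h₀, h₁⟩
    ext i
    fin_cases i <;> simp [stat, h₀, h₁]

instance finite_stat_fiber (f : BT → ℕ) (d : Fin 2 →₀ ℕ) : Finite {T // stat f T = d} :=
  Set.Finite.to_subtype <| (finite_setOf_size_le (d 0)).subset fun _ hT =>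
    (stat_eq_iff.1 hT).1.le

lemma stat_leaf {f : BT → ℕ} (hf : f leaf = 0) : stat f leaf = 0 := by
  simp [stat, size, hf]

lemma stat_node {f g h : BT → ℕ} {k : ℕ} (hf : ∀ l r, f (node l r) = k + g l + h r)
    (l r : BT) :
    stat f (node l r) = (Finsupp.single 0 1 + Finsupp.single 1 k) + (stat g l + stat h r) := by
  simp only [stat, size, hf, Finsupp.single_add]
  abel

end BT

open BT

lemma Bser_eq_genSeries : Bser = genSeries (stat hookCount) :=
  funext fun _ => congrArg ((↑) : ℕ → ℚ)
    (Nat.card_congr (Equiv.subtypeEquivRight fun _ => stat_eq_iff.symm))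

lemma monomial_single_zero_one_add_single_one_one :
    monomial (Finsupp.single 0 1 + Finsupp.single 1 1) (1 : ℚ) = X (0 : Fin 2) * X 1 := by
  rw [X_def, X_def, monomial_mul_monomial, one_mul]

lemma monomial_single_zero_one_add_single_one_zero :
    monomial (Finsupp.single 0 1 + Finsupp.single 1 0) (1 : ℚ) = X (0 : Fin 2) := by
  rw [Finsupp.single_zero, add_zero, X_def]

lemma genSeries_stat_hookCount :
    genSeries (stat hookCount) =
      1 + X 0 * X 1 * (genSeries (stat hookAuxL) * genSeries (stat hookAuxR)) := by
  rw [← monomial_single_zero_one_add_single_one_one]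
  exact genSeries_eq_one_add _ _ _ _ (stat_leaf rfl) (stat_node fun _ _ => rfl)

lemma inv_one_sub_X_mul_Bser_eq_genSeries_stat_hookAuxL :
    (1 - X 0 * Bser)⁻¹ = genSeries (stat hookAuxL) := by
  refine inv_one_sub_eq_of_eq_one_add_mul (by simp) ?_
  rw [Bser_eq_genSeries]
  refine (genSeries_eq_one_add _ (stat hookAuxL) (stat hookCount) _ (stat_leaf rfl)
    (stat_node (k := 0) fun _ _ => by simp only [hookAuxL]; omega)).trans ?_
  rw [monomial_single_zero_one_add_single_one_zero]
  ring

lemma inv_one_sub_X_mul_Bser_eq_genSeries_stat_hookAuxR :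
    (1 - X 0 * Bser)⁻¹ = genSeries (stat hookAuxR) := by
  refine inv_one_sub_eq_of_eq_one_add_mul (by simp) ?_
  rw [Bser_eq_genSeries]
  refine (genSeries_eq_one_add _ (stat hookCount) (stat hookAuxR) _ (stat_leaf rfl)
    (stat_node (k := 0) fun _ _ => by simp only [hookAuxR]; omega)).trans ?_
  rw [monomial_single_zero_one_add_single_one_zero]
  ring

/-- The generating series of binary trees counted by vertices (`x`)
and hook number (`t`) satisfies `B = 1 + x t (1/(1 - x B))²`. -/
theorem stmt17 :
    Bser = 1 + MvPowerSeries.X 0 * MvPowerSeries.X 1 *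
      ((1 - MvPowerSeries.X 0 * Bser)⁻¹) ^ 2 :=
  calc Bser = 1 + X 0 * X 1 * (genSeries (stat hookAuxL) * genSeries (stat hookAuxR)) := by
        rw [Bser_eq_genSeries, genSeries_stat_hookCount]
    _ = _ := by
        rw [← inv_one_sub_X_mul_Bser_eq_genSeries_stat_hookAuxL,
          ← inv_one_sub_X_mul_Bser_eq_genSeries_stat_hookAuxR, sq]
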